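/- Let (Ω, 𝔽, P) be a probability space with random variables X : Ω → 𝒳 and Y : Ω → 𝒴 taking values in standard Borel spaces, and Z : Ω → {1,2} measurable with 0 < P(Z = 1) < 1. Let P^{(j)} denote P conditioned on the event {Z = j}, for j ∈ {1,2}, and suppose the laws of X under P^{(1)} and under P^{(2)} are mutually absolutely continuous. Then Y and Z are conditionally independent given the σ-algebra generated by X under P if and only if a regular conditional distribution of Y given X under P^{(1)} and a regular conditional distribution of Y given X under P^{(2)} coincide for almost every x with respect to the law of X under P^{(1)} (equivalently, under P^{(2)}). -/

import Mathlib

/-!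
Write `ν` and `r` for the conditional distributions of `Y` and of `Z` given `X` under `P`.
Conditional independence of `Y` and `Z` given `X` says exactly that the joint law of `(X, Y, Z)`
is `(law of X) ⊗ (ν × r)`. By Bayes' formula the law of `X` on the event `{Z = t}` has density
`x ↦ r x {t}` with respect to the law of `X`, so this factorisation holds iff, for each `t`, `ν`
is a regular conditional distribution of `Y` given `X` on `{Z = t}`, that is, iff `κₜ = ν`
almost everywhere for both values of `t`; this gives `κ₁ = κ₂` by absolute continuity.
Conversely, if `κ₁ = κ₂` almost everywhere, mutual absolute continuity lets `κ₁` disintegrate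
the law of `(X, Y)` on both events, hence under `P`, so `κ₁ = ν` almost everywhere.
-/

open MeasureTheory ProbabilityTheory

/-- `κ` is a regular conditional distribution of `Y` given `X` under the measure `Q`:
it is a Markov kernel and the joint law of `(X, Y)` under `Q` disintegrates as the law of
`X` composed with the kernel, i.e. `Q(X ∈ A, Y ∈ B) = ∫_A κ(x)(B) d(Q ∘ X⁻¹)(x)` for all
measurable `A`, `B`. -/
def IsRegCondDistrib {Ω 𝒳 𝒴 : Type*} [MeasurableSpace Ω] [MeasurableSpace 𝒳]
    [MeasurableSpace 𝒴] (Q : Measure Ω) (X : Ω → 𝒳) (Y : Ω → 𝒴)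
    (κ : Kernel 𝒳 𝒴) : Prop :=
  IsMarkovKernel κ ∧
  ∀ A : Set 𝒳, MeasurableSet A → ∀ B : Set 𝒴, MeasurableSet B →
    Q (X ⁻¹' A ∩ Y ⁻¹' B) = ∫⁻ x in A, κ x B ∂(Q.map X)

/-- `Y` and `Z` are conditionally independent given the σ-algebra `mX` under `P`:
`E[g(Y) h(Z) ∣ mX] = E[g(Y) ∣ mX] · E[h(Z) ∣ mX]` almost surely for all bounded
measurable `g`, `h`. -/
def CondIndepGiven {Ω 𝒴 : Type*} [MeasurableSpace Ω] [MeasurableSpace 𝒴]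
    (P : Measure Ω) (mX : MeasurableSpace Ω) (Y : Ω → 𝒴) (Z : Ω → Bool) : Prop :=
  ∀ g : 𝒴 → ℝ, Measurable g → (∃ C, ∀ y, |g y| ≤ C) →
  ∀ h : Bool → ℝ, Measurable h → (∃ C, ∀ b, |h b| ≤ C) →
    P[fun ω => g (Y ω) * h (Z ω)|mX]
      =ᵐ[P] fun ω => (P[fun ω' => g (Y ω')|mX]) ω * (P[fun ω' => h (Z ω')|mX]) ω

open scoped ENNReal

lemma ProbabilityTheory.measure_smul_cond {Ω : Type*} [MeasurableSpace Ω] (μ : Measure Ω)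
    [IsFiniteMeasure μ] (s : Set Ω) : μ s • μ[|s] = μ.restrict s := by
  rcases eq_or_ne (μ s) 0 with hs | hs
  · rw [hs, zero_smul, Measure.restrict_eq_zero.2 hs]
  · rw [cond, smul_smul, ENNReal.mul_inv_cancel hs (measure_ne_top μ s), one_smul]

lemma MeasureTheory.Measure.ext_prod₃_of_singleton {α β γ : Type*} [MeasurableSpace α]
    [MeasurableSpace β] [MeasurableSpace γ] [Countable γ] [MeasurableSingletonClass γ]
    {ρ ρ' : Measure (α × β × γ)} [IsFiniteMeasure ρ]
    (h : ∀ A, MeasurableSet A → ∀ B, MeasurableSet B → ∀ c,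
      ρ (A ×ˢ B ×ˢ {c}) = ρ' (A ×ˢ B ×ˢ {c})) : ρ = ρ' := by
  refine Measure.ext_prod₃ fun {A B T} hA hB _ => ?_
  have hT : A ×ˢ B ×ˢ T = ⋃ c ∈ T, A ×ˢ B ×ˢ {c} := by ext; simp
  have hdisj : T.PairwiseDisjoint fun c => A ×ˢ B ×ˢ ({c} : Set γ) := fun c _ c' _ hcc' =>
    Set.disjoint_prod.2 (Or.inr (Set.disjoint_prod.2 (Or.inr (Set.disjoint_singleton.2 hcc'))))
  have hmeas : ∀ c ∈ T, MeasurableSet (A ×ˢ B ×ˢ ({c} : Set γ)) := fun c _ =>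
    hA.prod (hB.prod (measurableSet_singleton c))
  rw [hT, measure_biUnion T.to_countable hdisj hmeas, measure_biUnion T.to_countable hdisj hmeas]
  exact tsum_congr fun c => h A hA B hB c

lemma ProbabilityTheory.map_restrict_preimage_eq_withDensity_condDistrib {Ω 𝒳 β : Type*}
    [MeasurableSpace Ω] [MeasurableSpace 𝒳] [MeasurableSpace β] [StandardBorelSpace β]
    [Nonempty β] {P : Measure Ω} [IsFiniteMeasure P] {X : Ω → 𝒳} {Z : Ω → β}
    (hX : Measurable X) (hZ : Measurable Z) {T : Set β} (hT : MeasurableSet T) :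
    (P.restrict (Z ⁻¹' T)).map X = (P.map X).withDensity fun x => condDistrib Z X P x T := by
  ext A hA
  rw [Measure.map_apply hX hA, Measure.restrict_apply (hX hA), withDensity_apply _ hA,
    setLIntegral_map hA (Kernel.measurable_coe _ hT) hX,
    setLIntegral_preimage_condDistrib hX hZ.aemeasurable hT hA]

namespace IsRegCondDistrib

variable {Ω 𝒳 𝒴 : Type*} [MeasurableSpace Ω] [MeasurableSpace 𝒳] [MeasurableSpace 𝒴]
  {Q Q' : Measure Ω} {X : Ω → 𝒳} {Y : Ω → 𝒴} {κ η : Kernel 𝒳 𝒴}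

lemma smul (hκ : IsRegCondDistrib Q X Y κ) (c : ℝ≥0∞) : IsRegCondDistrib (c • Q) X Y κ :=
  ⟨hκ.1, fun A hA B hB => by
    rw [Measure.smul_apply, hκ.2 A hA B hB, Measure.map_smul, Measure.restrict_smul,
      lintegral_smul_measure, smul_eq_mul]⟩

lemma add (hX : Measurable X) (hκ : IsRegCondDistrib Q X Y κ)
    (hκ' : IsRegCondDistrib Q' X Y κ) : IsRegCondDistrib (Q + Q') X Y κ :=
  ⟨hκ.1, fun A hA B hB => by
    rw [Measure.add_apply, hκ.2 A hA B hB, hκ'.2 A hA B hB, Measure.map_add _ _ hX,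
      Measure.restrict_add, lintegral_add_measure]⟩

lemma congr_ae (hκ : IsRegCondDistrib Q X Y κ) [IsMarkovKernel η] (h : κ =ᵐ[Q.map X] η) :
    IsRegCondDistrib Q X Y η :=
  ⟨‹_›, fun A hA B hB => by
    rw [hκ.2 A hA B hB]
    exact lintegral_congr_ae (ae_restrict_of_ae (h.mono fun x hx => congrArg (· B) hx))⟩

lemma restrict_of_cond [IsFiniteMeasure Q] {s : Set Ω} (hκ : IsRegCondDistrib (Q[|s]) X Y κ) :
    IsRegCondDistrib (Q.restrict s) X Y κ :=
  measure_smul_cond Q s ▸ hκ.smul (Q s)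

lemma map_eq_compProd [IsFiniteMeasure Q] (hX : Measurable X) (hY : Measurable Y)
    (hκ : IsRegCondDistrib Q X Y κ) : Q.map (fun ω => (X ω, Y ω)) = Q.map X ⊗ₘ κ := by
  have := hκ.1
  refine Measure.ext_prod fun {A B} hA hB => ?_
  rw [Measure.map_apply (hX.prodMk hY) (hA.prod hB), Set.mk_preimage_prod,
    Measure.compProd_apply_prod hA hB, hκ.2 A hA B hB]

lemma ae_eq [IsFiniteMeasure Q] [MeasurableSpace.CountableOrCountablyGenerated 𝒳 𝒴]
    (hX : Measurable X) (hY : Measurable Y) (hκ : IsRegCondDistrib Q X Y κ)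
    (hη : IsRegCondDistrib Q X Y η) : κ =ᵐ[Q.map X] η := by
  have := hκ.1
  have := hη.1
  exact Kernel.ae_eq_of_compProd_eq
    ((hκ.map_eq_compProd hX hY).symm.trans (hη.map_eq_compProd hX hY))

lemma ae_eq_condDistrib [StandardBorelSpace 𝒴] [Nonempty 𝒴] [IsFiniteMeasure Q]
    (hX : Measurable X) (hY : Measurable Y) (hκ : IsRegCondDistrib Q X Y κ) :
    κ =ᵐ[Q.map X] condDistrib Y X Q :=
  have := hκ.1
  (condDistrib_ae_eq_of_measure_eq_compProd X hY.aemeasurable (hκ.map_eq_compProd hX hY)).symm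

lemma restrict_iff_ae_eq [IsFiniteMeasure Q] [MeasurableSpace.CountableOrCountablyGenerated 𝒳 𝒴]
    (hX : Measurable X) (hY : Measurable Y) {s : Set Ω} (hκ : IsRegCondDistrib (Q[|s]) X Y κ)
    [IsMarkovKernel η] : IsRegCondDistrib (Q.restrict s) X Y η ↔ κ =ᵐ[(Q[|s]).map X] η := by
  have hκ' := hκ.restrict_of_cond
  have := hκ.1
  refine ⟨fun hη => Measure.smul_absolutelyContinuous.map hX (hκ'.ae_eq hX hY hη),
    fun h => hκ'.congr_ae ?_⟩
  rw [← measure_smul_cond]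
  exact Measure.smul_absolutelyContinuous.map hX h

end IsRegCondDistrib

lemma isRegCondDistrib_restrict_preimage_iff {Ω 𝒳 𝒴 β : Type*} [MeasurableSpace Ω]
    [MeasurableSpace 𝒳] [MeasurableSpace 𝒴] [MeasurableSpace β] [StandardBorelSpace β]
    [Nonempty β] {P : Measure Ω} [IsFiniteMeasure P] {X : Ω → 𝒳} {Y : Ω → 𝒴} {Z : Ω → β}
    (hX : Measurable X) (hY : Measurable Y) (hZ : Measurable Z) (ν : Kernel 𝒳 𝒴)
    [IsMarkovKernel ν] {T : Set β} (hT : MeasurableSet T) :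
    IsRegCondDistrib (P.restrict (Z ⁻¹' T)) X Y ν ↔
      ∀ A, MeasurableSet A → ∀ B, MeasurableSet B →
        P.map (fun ω => (X ω, Y ω, Z ω)) (A ×ˢ B ×ˢ T) =
          (P.map X ⊗ₘ (ν ×ₖ condDistrib Z X P)) (A ×ˢ B ×ˢ T) := by
  refine (and_iff_right ‹_›).trans (forall₄_congr fun A hA B hB => ?_)
  rw [Measure.map_apply (hX.prodMk (hY.prodMk hZ)) (hA.prod (hB.prod hT)),
    Measure.compProd_apply_prod hA (hB.prod hT), Measure.restrict_apply ((hX hA).inter (hY hB)),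
    map_restrict_preimage_eq_withDensity_condDistrib hX hZ hT, restrict_withDensity hA,
    lintegral_withDensity_eq_lintegral_mul _ (Kernel.measurable_coe _ hT)
      (Kernel.measurable_coe _ hB)]
  simp only [Set.mk_preimage_prod, Set.inter_assoc, Kernel.prod_apply_prod, Pi.mul_apply, mul_comm]

section CondIndepGiven

variable {Ω 𝒳 𝒴 : Type*} [MeasurableSpace Ω] [MeasurableSpace 𝒳] [MeasurableSpace 𝒴]
  {P : Measure Ω} {X : Ω → 𝒳} {Y : Ω → 𝒴} {Z : Ω → Bool}

lemma CondIndepGiven.condExp_inter_preimage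
    (h : CondIndepGiven P (MeasurableSpace.comap X inferInstance) Y Z) {B : Set 𝒴}
    (hB : MeasurableSet B) (T : Set Bool) :
    P⟦Y ⁻¹' B ∩ Z ⁻¹' T | MeasurableSpace.comap X inferInstance⟧ =ᵐ[P] fun ω =>
      (P⟦Y ⁻¹' B | MeasurableSpace.comap X inferInstance⟧) ω *
        (P⟦Z ⁻¹' T | MeasurableSpace.comap X inferInstance⟧) ω := by
  have := h _ (measurable_one.indicator hB) ⟨1, fun y => by by_cases hy : y ∈ B <;> simp [hy]⟩
    _ (measurable_one.indicator (Set.toFinite T).measurableSet)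
    ⟨1, fun b => by by_cases hb : b ∈ T <;> simp [hb]⟩
  simp only [← Set.indicator_comp_right, Pi.one_comp] at this
  rwa [show (fun _ => 1 : Ω → ℝ) = 1 from rfl, Set.inter_indicator_one]

variable [StandardBorelSpace 𝒴] [Nonempty 𝒴] [IsFiniteMeasure P]

lemma CondIndepGiven.condDistrib_prod_apply_prod_ae_eq (hX : Measurable X) (hY : Measurable Y)
    (hZ : Measurable Z) (h : CondIndepGiven P (MeasurableSpace.comap X inferInstance) Y Z)
    {B : Set 𝒴} (hB : MeasurableSet B) (T : Set Bool) :
    ∀ᵐ ω ∂P, condDistrib (fun ω => (Y ω, Z ω)) X P (X ω) (B ×ˢ T) =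
      condDistrib Y X P (X ω) B * condDistrib Z X P (X ω) T := by
  have hT : MeasurableSet T := (Set.toFinite T).measurableSet
  filter_upwards [h.condExp_inter_preimage hB T,
    condDistrib_ae_eq_condExp hX (hY.prodMk hZ) (hB.prod hT),
    condDistrib_ae_eq_condExp hX hY hB, condDistrib_ae_eq_condExp hX hZ hT]
    with ω hCI hYZ hY hZ
  rw [Set.mk_preimage_prod] at hYZ
  rw [← ENNReal.toReal_eq_toReal_iff' (measure_ne_top _ _)
    (ENNReal.mul_ne_top (measure_ne_top _ _) (measure_ne_top _ _)), ENNReal.toReal_mul]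
  simp only [← measureReal_def, hY, hZ, hYZ, hCI]

lemma CondIndepGiven.map_apply_prod_prod (hX : Measurable X) (hY : Measurable Y)
    (hZ : Measurable Z) (h : CondIndepGiven P (MeasurableSpace.comap X inferInstance) Y Z)
    {A : Set 𝒳} {B : Set 𝒴} {T : Set Bool} (hA : MeasurableSet A) (hB : MeasurableSet B)
    (hT : MeasurableSet T) :
    P.map (fun ω => (X ω, Y ω, Z ω)) (A ×ˢ B ×ˢ T) =
      (P.map X ⊗ₘ (condDistrib Y X P ×ₖ condDistrib Z X P)) (A ×ˢ B ×ˢ T) := by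
  rw [Measure.map_apply (hX.prodMk (hY.prodMk hZ)) (hA.prod (hB.prod hT)),
    Measure.compProd_apply_prod hA (hB.prod hT),
    setLIntegral_map hA (Kernel.measurable_coe _ (hB.prod hT)) hX, Set.mk_preimage_prod,
    ← setLIntegral_preimage_condDistrib hX (hY.prodMk hZ).aemeasurable (hB.prod hT) hA]
  refine lintegral_congr_ae (ae_restrict_of_ae ?_)
  filter_upwards [h.condDistrib_prod_apply_prod_ae_eq hX hY hZ hB T] with ω hω
  rw [hω, Kernel.prod_apply_prod]

lemma condIndepGiven_of_map_eq_compProd (hX : Measurable X) (hY : Measurable Y)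
    (hZ : Measurable Z) (h : P.map (fun ω => (X ω, Y ω, Z ω)) =
      P.map X ⊗ₘ (condDistrib Y X P ×ₖ condDistrib Z X P)) :
    CondIndepGiven P (MeasurableSpace.comap X inferInstance) Y Z := by
  intro g hg ⟨Cg, hCg⟩ f hf ⟨Cf, hCf⟩
  have hgY : Integrable (fun ω => g (Y ω)) P :=
    .of_bound (hg.comp hY).aestronglyMeasurable Cg (ae_of_all _ fun ω => hCg (Y ω))
  have hfZ : Integrable (fun ω => f (Z ω)) P :=
    .of_bound (hf.comp hZ).aestronglyMeasurable Cf (ae_of_all _ fun ω => hCf (Z ω))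
  have hYZ : condDistrib (fun ω => (Y ω, Z ω)) X P =ᵐ[P.map X]
      condDistrib Y X P ×ₖ condDistrib Z X P :=
    condDistrib_ae_eq_of_measure_eq_compProd X (hY.prodMk hZ).aemeasurable h
  filter_upwards [condExp_ae_eq_integral_condDistrib hX (hY.prodMk hZ).aemeasurable
      (f := fun p : 𝒴 × Bool => g p.1 * f p.2)
      ((hg.comp measurable_fst).mul (hf.comp measurable_snd)).stronglyMeasurable
      (hfZ.bdd_mul (hg.comp hY).aestronglyMeasurable (ae_of_all _ fun ω => hCg (Y ω))),
    condExp_ae_eq_integral_condDistrib hX hY.aemeasurable hg.stronglyMeasurable hgY,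
    condExp_ae_eq_integral_condDistrib hX hZ.aemeasurable hf.stronglyMeasurable hfZ,
    ae_of_ae_map hX.aemeasurable hYZ] with ω hgf hg hf hω
  rw [hgf, hg, hf, hω, Kernel.prod_apply, integral_prod_mul]

lemma condIndepGiven_iff_forall_isRegCondDistrib_restrict (hX : Measurable X)
    (hY : Measurable Y) (hZ : Measurable Z) :
    CondIndepGiven P (MeasurableSpace.comap X inferInstance) Y Z ↔
      ∀ t, IsRegCondDistrib (P.restrict {ω | Z ω = t}) X Y (condDistrib Y X P) := by
  have key (t : Bool) := isRegCondDistrib_restrict_preimage_iff (P := P) hX hY hZ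
    (condDistrib Y X P) (measurableSet_singleton t)
  exact ⟨fun h t => (key t).2 fun A hA B hB =>
      h.map_apply_prod_prod hX hY hZ hA hB (measurableSet_singleton t),
    fun h => condIndepGiven_of_map_eq_compProd hX hY hZ
      (Measure.ext_prod₃_of_singleton fun A hA B hB t => (key t).1 (h t) A hA B hB)⟩

end CondIndepGiven

theorem condIndep_iff_regCondDistrib_ae_eq_general
    {Ω 𝒳 𝒴 : Type*} [MeasurableSpace Ω]
    [MeasurableSpace 𝒳]
    [MeasurableSpace 𝒴] [StandardBorelSpace 𝒴]
    (P : Measure Ω) [IsProbabilityMeasure P]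
    (X : Ω → 𝒳) (Y : Ω → 𝒴) (Z : Ω → Bool)
    (hX : Measurable X) (hY : Measurable Y) (hZ : Measurable Z)
    (habs1 : (P[|{ω | Z ω = true}]).map X ≪ (P[|{ω | Z ω = false}]).map X)
    (habs2 : (P[|{ω | Z ω = false}]).map X ≪ (P[|{ω | Z ω = true}]).map X)
    (κ1 κ2 : Kernel 𝒳 𝒴)
    (hκ1 : IsRegCondDistrib (P[|{ω | Z ω = true}]) X Y κ1)
    (hκ2 : IsRegCondDistrib (P[|{ω | Z ω = false}]) X Y κ2) :
    CondIndepGiven P (MeasurableSpace.comap X inferInstance) Y Z ↔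
      ∀ᵐ x ∂((P[|{ω | Z ω = true}]).map X), κ1 x = κ2 x := by
  have : Nonempty 𝒴 := (nonempty_of_isProbabilityMeasure P).map Y
  have := hκ1.1
  rw [condIndepGiven_iff_forall_isRegCondDistrib_restrict hX hY hZ, Bool.forall_bool,
    hκ1.restrict_iff_ae_eq hX hY, hκ2.restrict_iff_ae_eq hX hY]
  constructor
  · rintro ⟨hν2, hν1⟩
    exact hν1.trans (Filter.EventuallyEq.symm (habs1 hν2))
  · intro h12
    have h21 : κ2 =ᵐ[(P[|{ω | Z ω = false}]).map X] κ1 := Filter.EventuallyEq.symm (habs2 h12)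
    have hsplit : P.restrict (Z ⁻¹' {true}) + P.restrict (Z ⁻¹' {false}) = P := by
      simpa [← Set.preimage_compl, Bool.compl_singleton] using
        Measure.restrict_add_restrict_compl (μ := P) (hZ (measurableSet_singleton true))
    have hP : IsRegCondDistrib P X Y κ1 := by
      rw [← hsplit]
      exact hκ1.restrict_of_cond.add hX ((hκ2.restrict_iff_ae_eq hX hY).2 h21)
    have hν := hP.ae_eq_condDistrib hX hY
    have hcond_ac (t : Bool) : (P[|{ω | Z ω = t}]).map X ≪ P.map X :=
      cond_absolutelyContinuous.map hX
    exact ⟨h21.trans (hcond_ac false hν), hcond_ac true hν⟩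

/-- **Conditional independence is equivalent to equality of the two conditional
distributions** (the equivalence (2)).  Let `(Ω, 𝔽, P)` be a probability space with
random variables `X : Ω → 𝒳` and `Y : Ω → 𝒴` taking values in standard Borel spaces and
`Z : Ω → {1,2}` (encoded by `Bool`, `true` standing for `Z = 1`) with `0 < P(Z=1) < 1`.
Let `P⁽ʲ⁾ = P[·∣Z=j]` and suppose the laws of `X` under `P⁽¹⁾` and `P⁽²⁾` are mutually
absolutely continuous.  Then `Y ⟂⟂ Z ∣ σ(X)` under `P` if and only if a regular
conditional distribution `κ₁` of `Y` given `X` under `P⁽¹⁾` and a regular conditional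
distribution `κ₂` of `Y` given `X` under `P⁽²⁾` coincide for almost every `x` with
respect to the law of `X` under `P⁽¹⁾` (equivalently, under `P⁽²⁾`). -/
theorem condIndep_iff_regCondDistrib_ae_eq
    {Ω 𝒳 𝒴 : Type*} [MeasurableSpace Ω]
    [MeasurableSpace 𝒳] [StandardBorelSpace 𝒳]
    [MeasurableSpace 𝒴] [StandardBorelSpace 𝒴]
    (P : Measure Ω) [IsProbabilityMeasure P]
    (X : Ω → 𝒳) (Y : Ω → 𝒴) (Z : Ω → Bool)
    (hX : Measurable X) (hY : Measurable Y) (hZ : Measurable Z)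
    (hZpos : 0 < P {ω | Z ω = true}) (hZlt : P {ω | Z ω = true} < 1)
    (habs1 : (P[|{ω | Z ω = true}]).map X ≪ (P[|{ω | Z ω = false}]).map X)
    (habs2 : (P[|{ω | Z ω = false}]).map X ≪ (P[|{ω | Z ω = true}]).map X)
    (κ1 κ2 : Kernel 𝒳 𝒴)
    (hκ1 : IsRegCondDistrib (P[|{ω | Z ω = true}]) X Y κ1)
    (hκ2 : IsRegCondDistrib (P[|{ω | Z ω = false}]) X Y κ2) :
    CondIndepGiven P (MeasurableSpace.comap X inferInstance) Y Z ↔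
      ∀ᵐ x ∂((P[|{ω | Z ω = true}]).map X), κ1 x = κ2 x :=
  condIndep_iff_regCondDistrib_ae_eq_general P X Y Z hX hY hZ habs1 habs2 κ1 κ2 hκ1 hκ2
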